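/- The independent entropy-regularized NPG update guarantees, for every t ≥ 0, Φ_τ(π^(t+1)) − Φ_τ(π^(t)) ≥ (1/η − √N − τ) · J(π^(t+1), π^(t)). -/

import Mathlib

open Finset

noncomputable section

/-- A probability distribution on a finite action set. -/
def IsDist {A : Type*} [Fintype A] (p : A → ℝ) : Prop :=
  (∀ a, 0 ≤ p a) ∧ ∑ a, p a = 1

/-- Shannon entropy of a distribution. -/
def entropy {A : Type*} [Fintype A] (p : A → ℝ) : ℝ :=
  -∑ a, p a * Real.log (p a)

/-- Kullback-Leibler divergence on a finite set. -/
def KLdiv {A : Type*} [Fintype A] (p q : A → ℝ) : ℝ :=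
  ∑ a, p a * (Real.log (p a) - Real.log (q a))

/-- Jeffrey divergence: the symmetrized KL divergence. -/
def Jdiv {A : Type*} [Fintype A] (p q : A → ℝ) : ℝ :=
  KLdiv p q + KLdiv q p

/-- Joint product distribution induced by a product policy. -/
def jointPmf {N : ℕ} {A : Type*} [Fintype A] (π : Fin N → A → ℝ) :
    (Fin N → A) → ℝ :=
  fun a => ∏ i, π i (a i)

/-- Expectation of `f` under the product policy `π`. -/
def expVal {N : ℕ} {A : Type*} [Fintype A] (π : Fin N → A → ℝ)
    (f : (Fin N → A) → ℝ) : ℝ :=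
  ∑ a, jointPmf π a * f a

/-- Point mass at action `a`. -/
def pmfOf {A : Type*} [DecidableEq A] (a : A) : A → ℝ :=
  fun b => if b = a then 1 else 0

/-- Marginalized utility `r_i^π(a) = E_{a_{-i} ∼ π_{-i}}[u_i(a, a_{-i})]`. -/
def margU {N : ℕ} {A : Type*} [Fintype A] [DecidableEq A]
    (u : Fin N → (Fin N → A) → ℝ) (π : Fin N → A → ℝ) (i : Fin N) (a : A) : ℝ :=
  expVal (Function.update π i (pmfOf a)) (u i)

/-- Entropy-regularized utility `u_{i,τ}(π) = u_i(π) + τ H(π_i)`. -/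
def uReg {N : ℕ} {A : Type*} [Fintype A] (u : Fin N → (Fin N → A) → ℝ) (τ : ℝ)
    (i : Fin N) (π : Fin N → A → ℝ) : ℝ :=
  expVal π (u i) + τ * entropy (π i)

/-- `QRE-gap_τ(π)`. -/
def QREgap {N : ℕ} {A : Type*} [Fintype A] [DecidableEq A]
    (u : Fin N → (Fin N → A) → ℝ) (τ : ℝ) (π : Fin N → A → ℝ) : ℝ :=
  sSup {x | ∃ (i : Fin N) (p : A → ℝ), IsDist p ∧
    x = uReg u τ i (Function.update π i p) - uReg u τ i π}

/-- `NE-gap(π)`. -/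
def NEgap {N : ℕ} {A : Type*} [Fintype A] [DecidableEq A]
    (u : Fin N → (Fin N → A) → ℝ) (π : Fin N → A → ℝ) : ℝ :=
  sSup {x | ∃ (i : Fin N) (p : A → ℝ), IsDist p ∧
    x = expVal (Function.update π i p) (u i) - expVal π (u i)}

/-- Entropy-regularized potential `Φ_τ(π) = Φ(π) + τ ∑_i H(π_i)`. -/
def regPot {N : ℕ} {A : Type*} [Fintype A] (Φ : (Fin N → A) → ℝ) (τ : ℝ)
    (π : Fin N → A → ℝ) : ℝ :=
  expVal π Φ + τ * ∑ i, entropy (π i)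

/-- `Φ` is a potential function for the game with utilities `u`. -/
def IsPotential {N : ℕ} {A : Type*} [Fintype A] [DecidableEq A]
    (u : Fin N → (Fin N → A) → ℝ) (Φ : (Fin N → A) → ℝ) : Prop :=
  ∀ (i : Fin N) (a : Fin N → A) (a' : A),
    u i a - u i (Function.update a i a') = Φ a - Φ (Function.update a i a')

/-- The independent entropy-regularized NPG update rule. -/
def NPGstep {N : ℕ} {A : Type*} [Fintype A] [DecidableEq A]
    (u : Fin N → (Fin N → A) → ℝ) (τ η : ℝ) (π : ℕ → Fin N → A → ℝ) : Prop :=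
  ∀ t i a, π (t+1) i a =
    π t i a ^ (1 - η * τ) * Real.exp (η * margU u (π t) i a) /
      ∑ a', π t i a' ^ (1 - η * τ) * Real.exp (η * margU u (π t) i a')

/-- Best-response policy `π_i^⋆(a) ∝ exp(r_i^π(a)/τ)`. -/
def bestResp {N : ℕ} {A : Type*} [Fintype A] [DecidableEq A]
    (u : Fin N → (Fin N → A) → ℝ) (τ : ℝ) (π : Fin N → A → ℝ) (i : Fin N) :
    A → ℝ :=
  fun a => Real.exp (margU u π i a / τ) / ∑ a', Real.exp (margU u π i a' / τ)

/-!
Write `p = π^(t)` and `q = π^(t+1)`. Moving the agents from `p` to `q` one at a time, the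
potential property turns each increment of `Φ` into the marginalized utility of the moving agent
under the current hybrid policy, integrated against `q_i - p_i`. Were that hybrid `p` itself, the
NPG update would give the exact identity
`η (⟪q_i - p_i, r_i⟫ + τ (H q_i - H p_i)) = J(q_i, p_i) - η τ KL(q_i ‖ p_i)`, which is at least
`(1 - η τ) J(q_i, p_i)`, and the chain rule for `J` over the product adds these up. Since
utilities lie in `[0, 1]`, replacing the hybrid by `p` costs at most
`½ ‖q_i - p_i‖₁ ‖hybrid - p‖₁`; the Pinsker-type bound `‖μ - ν‖₁² ≤ 2 J(μ, ν)` and Cauchy–Schwarz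
over the `N` agents bound the total cost by `√N J(q, p)`.
-/

section Divergence

variable {A : Type*} [Fintype A]

theorem sub_le_mul_log_sub_log {x y : ℝ} (hx : 0 < x) (hy : 0 < y) :
    x - y ≤ x * (Real.log x - Real.log y) := by
  have h := Real.log_le_sub_one_of_pos (div_pos hy hx)
  rw [Real.log_div hy.ne' hx.ne'] at h
  have : x * (y / x - 1) = y - x := by field_simp
  nlinarith

theorem sq_div_add_le_sub_mul_log_sub_log {x y : ℝ} (hx : 0 < x) (hy : 0 < y) :
    (x - y) ^ 2 / (x + y) ≤ (x - y) * (Real.log x - Real.log y) := by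
  wlog hxy : y ≤ x generalizing x y
  · have := this hy hx (le_of_not_ge hxy)
    rw [add_comm] at this
    convert this using 1 <;> ring
  have hlog : (x - y) / x ≤ Real.log x - Real.log y := by
    rw [div_le_iff₀ hx, mul_comm]
    exact sub_le_mul_log_sub_log hx hy
  calc (x - y) ^ 2 / (x + y) = (x - y) * ((x - y) / (x + y)) := by ring
    _ ≤ (x - y) * ((x - y) / x) := by gcongr; linarith
    _ ≤ (x - y) * (Real.log x - Real.log y) := by gcongr

theorem Jdiv_eq_sum (p q : A → ℝ) :
    Jdiv p q = ∑ a, (p a - q a) * (Real.log (p a) - Real.log (q a)) := by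
  rw [Jdiv, KLdiv, KLdiv, ← sum_add_distrib]
  exact sum_congr rfl fun a _ => by ring

theorem Jdiv_self (p : A → ℝ) : Jdiv p p = 0 := by
  simp [Jdiv_eq_sum]

theorem Jdiv_nonneg {p q : A → ℝ} (hp : ∀ a, 0 < p a) (hq : ∀ a, 0 < q a) :
    0 ≤ Jdiv p q := by
  rw [Jdiv_eq_sum]
  refine sum_nonneg fun a _ => (div_nonneg (sq_nonneg _) ?_).trans
    (sq_div_add_le_sub_mul_log_sub_log (hp a) (hq a))
  linarith [hp a, hq a]

theorem KLdiv_nonneg {p q : A → ℝ} (hp : ∀ a, 0 < p a) (hq : ∀ a, 0 < q a)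
    (hpq : ∑ a, p a = ∑ a, q a) : 0 ≤ KLdiv p q := by
  calc (0 : ℝ) = ∑ a, (p a - q a) := by rw [sum_sub_distrib, hpq, sub_self]
    _ ≤ KLdiv p q := sum_le_sum fun a _ => sub_le_mul_log_sub_log (hp a) (hq a)

theorem sq_sum_abs_sub_le_two_mul_Jdiv {p q : A → ℝ} (hp : ∀ a, 0 < p a)
    (hq : ∀ a, 0 < q a) (hp1 : ∑ a, p a = 1) (hq1 : ∑ a, q a = 1) :
    (∑ a, |p a - q a|) ^ 2 ≤ 2 * Jdiv p q := by
  have hpq : ∀ a, 0 < p a + q a := fun a => add_pos (hp a) (hq a)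
  have titu := sq_sum_div_le_sum_sq_div univ (fun a => |p a - q a|) fun a _ => hpq a
  rw [sum_add_distrib, hp1, hq1] at titu
  calc (∑ a, |p a - q a|) ^ 2 ≤ 2 * ∑ a, |p a - q a| ^ 2 / (p a + q a) := by linarith
    _ ≤ 2 * Jdiv p q := by
      rw [Jdiv_eq_sum]
      gcongr with a
      rw [sq_abs]
      exact sq_div_add_le_sub_mul_log_sub_log (hp a) (hq a)

theorem abs_sum_sub_mul_le_half_sum_abs_sub {X : Type*} [Fintype X] {M V f : X → ℝ}
    (hMV : ∑ x, M x = ∑ x, V x) (hf : ∀ x, 0 ≤ f x ∧ f x ≤ 1) :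
    |∑ x, (M x - V x) * f x| ≤ (∑ x, |M x - V x|) / 2 := by
  -- centring `f` at `1/2` costs nothing because `M - V` has total mass zero
  have hcentre : ∑ x, (M x - V x) * f x = ∑ x, (M x - V x) * (f x - 1 / 2) := by
    simp only [mul_sub, sum_sub_distrib, ← sum_mul, hMV, sub_self, zero_mul, sub_zero]
  rw [hcentre, sum_div]
  refine (abs_sum_le_sum_abs _ _).trans (sum_le_sum fun x _ => ?_)
  rw [abs_mul, div_eq_mul_one_div]
  refine mul_le_mul_of_nonneg_left ?_ (abs_nonneg _)
  rw [abs_le]; constructor <;> linarith [hf x]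

end Divergence

section Hybrid

variable {N : ℕ} {β : Type*}

def hybrid (p q : Fin N → β) (k : ℕ) : Fin N → β :=
  fun j => if (j : ℕ) < k then q j else p j

theorem hybrid_zero (p q : Fin N → β) : hybrid p q 0 = p := by
  ext j; simp [hybrid]

theorem hybrid_length (p q : Fin N → β) : hybrid p q N = q := by
  ext j; simp [hybrid]

theorem hybrid_apply_self (p q : Fin N → β) (i : Fin N) : hybrid p q i i = p i := by
  simp [hybrid]

theorem update_hybrid_self (p q : Fin N → β) (i : Fin N) :
    Function.update (hybrid p q i) i (q i) = hybrid p q (i + 1) := by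
  ext j
  rcases eq_or_ne j i with rfl | h
  · simp [hybrid]
  · simp only [hybrid, Function.update_of_ne h, Nat.lt_succ_iff_lt_or_eq, Fin.val_ne_of_ne h,
      or_false]

theorem hybrid_apply_of_forall {P : β → Prop} {p q : Fin N → β} (hp : ∀ j, P (p j))
    (hq : ∀ j, P (q j)) (k : ℕ) (j : Fin N) : P (hybrid p q k j) := by
  unfold hybrid; split_ifs
  exacts [hq j, hp j]

theorem sub_eq_sum_update_hybrid (F : (Fin N → β) → ℝ) (p q : Fin N → β) :
    F q - F p = ∑ i : Fin N, (F (Function.update (hybrid p q i) i (q i))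
      - F (Function.update (hybrid p q i) i (p i))) := by
  conv_rhs => enter [2, i]; rw [update_hybrid_self, ← hybrid_apply_self p q i,
    Function.update_eq_self]
  rw [Fin.sum_univ_eq_sum_range (fun k => F (hybrid p q (k + 1)) - F (hybrid p q k)),
    sum_range_sub (fun k => F (hybrid p q k)), hybrid_zero, hybrid_length]

end Hybrid

section ProductPolicy

variable {N : ℕ} {A : Type*}

theorem update_funSplitAt_symm (i : Fin N) (y x : A) (c : {j // j ≠ i} → A) :
    Function.update ((Equiv.funSplitAt i A).symm (y, c)) i x
      = (Equiv.funSplitAt i A).symm (x, c) := by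
  ext j
  by_cases h : j = i
  · subst h; simp
  · simp [h]

theorem hybrid_pos {p q : Fin N → A → ℝ} (hp : ∀ j x, 0 < p j x) (hq : ∀ j x, 0 < q j x)
    (k : ℕ) : ∀ j x, 0 < hybrid p q k j x :=
  hybrid_apply_of_forall (P := fun r : A → ℝ => ∀ x, 0 < r x) hp hq k

variable [Fintype A] {p q : Fin N → A → ℝ}

theorem sum_jointPmf (π : Fin N → A → ℝ) : ∑ a, jointPmf π a = ∏ j, ∑ x, π j x :=
  (Fintype.prod_sum _).symm

theorem sum_jointPmf_eq_one {π : Fin N → A → ℝ} (hπ : ∀ j, ∑ x, π j x = 1) :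
    ∑ a, jointPmf π a = 1 := by
  simp [sum_jointPmf, hπ]

theorem jointPmf_pos {π : Fin N → A → ℝ} (hπ : ∀ j x, 0 < π j x) (a : Fin N → A) :
    0 < jointPmf π a :=
  prod_pos fun j _ => hπ j (a j)

theorem jointPmf_update (π : Fin N → A → ℝ) (i : Fin N) (ρ : A → ℝ) (a : Fin N → A) :
    jointPmf (Function.update π i ρ) a = ρ (a i) * ∏ j ∈ univ.erase i, π j (a j) := by
  rw [jointPmf, ← mul_prod_erase univ _ (mem_univ i), Function.update_self]
  congr 1
  exact prod_congr rfl fun j hj => by rw [Function.update_of_ne (ne_of_mem_erase hj)]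

theorem sum_jointPmf_mul_apply {π : Fin N → A → ℝ} (hπ : ∀ j, ∑ x, π j x = 1) (i : Fin N)
    (f : A → ℝ) : ∑ a, jointPmf π a * f (a i) = ∑ x, π i x * f x := by
  have hweight : ∀ a, jointPmf π a * f (a i)
      = jointPmf (Function.update π i fun x => π i x * f x) a := by
    intro a
    rw [jointPmf_update, jointPmf, ← mul_prod_erase univ _ (mem_univ i)]
    ring
  rw [sum_congr rfl fun a _ => hweight a, sum_jointPmf, ← mul_prod_erase univ _ (mem_univ i),
    Function.update_self, prod_eq_one fun j hj => ?_, mul_one]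
  rw [Function.update_of_ne (ne_of_mem_erase hj), hπ]

theorem KLdiv_jointPmf {μ ν : Fin N → A → ℝ} (hμ : ∀ j x, 0 < μ j x) (hν : ∀ j x, 0 < ν j x)
    (hμ1 : ∀ j, ∑ x, μ j x = 1) :
    KLdiv (jointPmf μ) (jointPmf ν) = ∑ j, KLdiv (μ j) (ν j) := by
  have hlog : ∀ a, Real.log (jointPmf μ a) - Real.log (jointPmf ν a)
      = ∑ j, (Real.log (μ j (a j)) - Real.log (ν j (a j))) := fun a => by
    rw [jointPmf, jointPmf, Real.log_prod fun j _ => (hμ j (a j)).ne',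
      Real.log_prod fun j _ => (hν j (a j)).ne', sum_sub_distrib]
  simp_rw [KLdiv, hlog, mul_sum]
  rw [sum_comm]
  exact sum_congr rfl fun j _ =>
    sum_jointPmf_mul_apply hμ1 j fun x => Real.log (μ j x) - Real.log (ν j x)

theorem Jdiv_jointPmf {μ ν : Fin N → A → ℝ} (hμ : ∀ j x, 0 < μ j x) (hν : ∀ j x, 0 < ν j x)
    (hμ1 : ∀ j, ∑ x, μ j x = 1) (hν1 : ∀ j, ∑ x, ν j x = 1) :
    Jdiv (jointPmf μ) (jointPmf ν) = ∑ j, Jdiv (μ j) (ν j) := by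
  rw [Jdiv, KLdiv_jointPmf hμ hν hμ1, KLdiv_jointPmf hν hμ hν1, ← sum_add_distrib]
  rfl

theorem sum_hybrid (hp1 : ∀ j, ∑ x, p j x = 1) (hq1 : ∀ j, ∑ x, q j x = 1) (k : ℕ) :
    ∀ j, ∑ x, hybrid p q k j x = 1 :=
  hybrid_apply_of_forall (P := fun r : A → ℝ => ∑ x, r x = 1) hp1 hq1 k

theorem Jdiv_jointPmf_hybrid_le (hp : ∀ j x, 0 < p j x) (hq : ∀ j x, 0 < q j x)
    (hp1 : ∀ j, ∑ x, p j x = 1) (hq1 : ∀ j, ∑ x, q j x = 1) (k : ℕ) :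
    Jdiv (jointPmf (hybrid p q k)) (jointPmf p) ≤ Jdiv (jointPmf q) (jointPmf p) := by
  rw [Jdiv_jointPmf (hybrid_pos hp hq k) hp (sum_hybrid hp1 hq1 k) hp1,
    Jdiv_jointPmf hq hp hq1 hp1]
  gcongr with j
  unfold hybrid
  split_ifs
  · exact le_rfl
  · rw [Jdiv_self]
    exact Jdiv_nonneg (hq j) (hp j)

theorem sum_sum_abs_sub_le_sqrt_mul_sqrt_Jdiv (hp : ∀ j x, 0 < p j x) (hq : ∀ j x, 0 < q j x)
    (hp1 : ∀ j, ∑ x, p j x = 1) (hq1 : ∀ j, ∑ x, q j x = 1) :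
    ∑ i, ∑ x, |q i x - p i x|
      ≤ Real.sqrt N * Real.sqrt (2 * Jdiv (jointPmf q) (jointPmf p)) := by
  rw [← Real.sqrt_mul (Nat.cast_nonneg N)]
  refine Real.le_sqrt_of_sq_le ((sq_sum_le_card_mul_sum_sq).trans ?_)
  rw [card_univ, Fintype.card_fin, Jdiv_jointPmf hq hp hq1 hp1]
  gcongr
  rw [mul_sum]
  gcongr with i
  exact sq_sum_abs_sub_le_two_mul_Jdiv (hq i) (hp i) (hq1 i) (hp1 i)

theorem sum_eq_sum_funSplitAt_symm (i : Fin N) (F : (Fin N → A) → ℝ) :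
    ∑ a, F a = ∑ y, ∑ c, F ((Equiv.funSplitAt i A).symm (y, c)) :=
  ((Equiv.funSplitAt i A).symm.sum_comp F).symm.trans (Fintype.sum_prod_type _)

theorem jointPmf_update_funSplitAt_symm (π : Fin N → A → ℝ) (i : Fin N) (ρ : A → ℝ) (y : A)
    (c : {j // j ≠ i} → A) :
    jointPmf (Function.update π i ρ) ((Equiv.funSplitAt i A).symm (y, c))
      = ρ y * ∏ j : {j // j ≠ i}, π j (c j) := by
  rw [jointPmf, Fintype.prod_eq_mul_prod_subtype_ne _ i]
  congr 1
  · simp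
  · exact prod_congr rfl fun j _ => by simp [j.2]

variable [DecidableEq A]

theorem expVal_update (π : Fin N → A → ℝ) (i : Fin N) (ρ : A → ℝ) (g : (Fin N → A) → ℝ) :
    expVal (Function.update π i ρ) g
      = ∑ x, ρ x * expVal (Function.update π i (pmfOf x)) g := by
  have hlin : ∀ a, jointPmf (Function.update π i ρ) a
      = ∑ x, ρ x * jointPmf (Function.update π i (pmfOf x)) a := fun a => by
    simp [jointPmf_update, pmfOf]
  simp_rw [expVal, hlin, sum_mul, mul_sum, mul_assoc]
  exact sum_comm

theorem expVal_update_pmfOf {π : Fin N → A → ℝ} {i : Fin N} (hπ : ∑ x, π i x = 1) (x : A)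
    (g : (Fin N → A) → ℝ) :
    expVal (Function.update π i (pmfOf x)) g = expVal π fun a => g (Function.update a i x) := by
  conv_rhs => rw [← Function.update_eq_self i π]
  simp only [expVal, sum_eq_sum_funSplitAt_symm i, jointPmf_update_funSplitAt_symm,
    update_funSplitAt_symm, mul_assoc, ← mul_sum, ← sum_mul, hπ, one_mul, pmfOf]
  simp

end ProductPolicy

section PotentialGame

variable {N : ℕ} {A : Type*} [Fintype A] [DecidableEq A]
  {u : Fin N → (Fin N → A) → ℝ} {p q : Fin N → A → ℝ}

theorem margU_eq_expVal (u : Fin N → (Fin N → A) → ℝ) {π : Fin N → A → ℝ} {i : Fin N}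
    (hπ : ∑ x, π i x = 1) (x : A) :
    margU u π i x = expVal π fun a => u i (Function.update a i x) :=
  expVal_update_pmfOf hπ x (u i)

theorem abs_margU_sub_margU_le (hu : ∀ i a, 0 ≤ u i a ∧ u i a ≤ 1) {σ π : Fin N → A → ℝ}
    (hσ : ∀ j, ∑ x, σ j x = 1) (hπ : ∀ j, ∑ x, π j x = 1) (i : Fin N) (x : A) :
    |margU u σ i x - margU u π i x| ≤ (∑ a, |jointPmf σ a - jointPmf π a|) / 2 := by
  rw [margU_eq_expVal u (hσ i), margU_eq_expVal u (hπ i), expVal, expVal, ← sum_sub_distrib]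
  simp_rw [← sub_mul]
  exact abs_sum_sub_mul_le_half_sum_abs_sub
    (by rw [sum_jointPmf_eq_one hσ, sum_jointPmf_eq_one hπ]) fun a => hu i _

theorem expVal_update_sub_expVal_update {Φ : (Fin N → A) → ℝ} (hpot : IsPotential u Φ)
    {σ : Fin N → A → ℝ} {i : Fin N} (hσ : ∑ x, σ i x = 1) {ρ ρ' : A → ℝ}
    (hρ : ∑ x, ρ x = ∑ x, ρ' x) :
    expVal (Function.update σ i ρ) Φ - expVal (Function.update σ i ρ') Φ
      = ∑ x, (ρ x - ρ' x) * margU u σ i x := by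
  -- `Φ - u i` does not depend on the action of agent `i`
  have hpure : ∀ x, expVal (Function.update σ i (pmfOf x)) Φ
      = margU u σ i x + expVal σ fun a => Φ a - u i a := fun x => by
    rw [margU_eq_expVal u hσ, expVal_update_pmfOf hσ, expVal, expVal, expVal, ← sum_add_distrib]
    refine sum_congr rfl fun a _ => ?_
    rw [← mul_add]
    congr 1
    linarith [hpot i a x]
  simp only [expVal_update, hpure, mul_add, sum_add_distrib, ← sum_mul, hρ,
    add_sub_add_right_eq_sub, ← sum_sub_distrib, sub_mul]

theorem expVal_sub_expVal_eq_sum_hybrid {Φ : (Fin N → A) → ℝ} (hpot : IsPotential u Φ)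
    (hp1 : ∀ j, ∑ x, p j x = 1) (hq1 : ∀ j, ∑ x, q j x = 1) :
    expVal q Φ - expVal p Φ = ∑ i, ∑ x, (q i x - p i x) * margU u (hybrid p q i) i x := by
  rw [sub_eq_sum_update_hybrid (fun π => expVal π Φ) p q]
  refine sum_congr rfl fun i _ => expVal_update_sub_expVal_update hpot ?_ (by rw [hq1, hp1])
  rw [hybrid_apply_self]
  exact hp1 i

theorem abs_sum_sum_mul_margU_hybrid_sub_le (hu : ∀ i a, 0 ≤ u i a ∧ u i a ≤ 1)
    (hp : ∀ j x, 0 < p j x) (hq : ∀ j x, 0 < q j x)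
    (hp1 : ∀ j, ∑ x, p j x = 1) (hq1 : ∀ j, ∑ x, q j x = 1) :
    |∑ i, ∑ x, (q i x - p i x) * (margU u (hybrid p q i) i x - margU u p i x)|
      ≤ Real.sqrt N * Jdiv (jointPmf q) (jointPmf p) := by
  set J := Jdiv (jointPmf q) (jointPmf p)
  have hJ : 0 ≤ J := Jdiv_nonneg (jointPmf_pos hq) (jointPmf_pos hp)
  have hmarg : ∀ (i : Fin N) x,
      |margU u (hybrid p q i) i x - margU u p i x| ≤ Real.sqrt (2 * J) / 2 := by
    intro i x
    have hσ1 := sum_hybrid hp1 hq1 i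
    refine (abs_margU_sub_margU_le hu hσ1 hp1 i x).trans
      (div_le_div_of_nonneg_right ?_ two_pos.le)
    refine Real.le_sqrt_of_sq_le ((sq_sum_abs_sub_le_two_mul_Jdiv
      (jointPmf_pos (hybrid_pos hp hq i)) (jointPmf_pos hp) (sum_jointPmf_eq_one hσ1)
      (sum_jointPmf_eq_one hp1)).trans ?_)
    gcongr
    exact Jdiv_jointPmf_hybrid_le hp hq hp1 hq1 i
  calc |∑ i, ∑ x, (q i x - p i x) * (margU u (hybrid p q i) i x - margU u p i x)|
      ≤ ∑ i, ∑ x, |q i x - p i x| * (Real.sqrt (2 * J) / 2) := by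
        refine (abs_sum_le_sum_abs _ _).trans (sum_le_sum fun i _ => ?_)
        refine (abs_sum_le_sum_abs _ _).trans (sum_le_sum fun x _ => ?_)
        rw [abs_mul]
        exact mul_le_mul_of_nonneg_left (hmarg i x) (abs_nonneg _)
    _ ≤ Real.sqrt N * Real.sqrt (2 * J) * (Real.sqrt (2 * J) / 2) := by
        simp only [← sum_mul]
        gcongr
        exact sum_sum_abs_sub_le_sqrt_mul_sqrt_Jdiv hp hq hp1 hq1
    _ = Real.sqrt N * J := by
        rw [mul_assoc, ← mul_div_assoc, Real.mul_self_sqrt (by positivity)]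
        ring

theorem le_regPot_sub_regPot (hu : ∀ i a, 0 ≤ u i a ∧ u i a ≤ 1) {Φ : (Fin N → A) → ℝ}
    (hpot : IsPotential u Φ) (τ : ℝ) (hp : ∀ j x, 0 < p j x) (hq : ∀ j x, 0 < q j x)
    (hp1 : ∀ j, ∑ x, p j x = 1) (hq1 : ∀ j, ∑ x, q j x = 1) :
    ∑ i, (∑ x, (q i x - p i x) * margU u p i x + τ * (entropy (q i) - entropy (p i)))
        - Real.sqrt N * Jdiv (jointPmf q) (jointPmf p)
      ≤ regPot Φ τ q - regPot Φ τ p := by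
  have hsplit : regPot Φ τ q - regPot Φ τ p
      = ∑ i, (∑ x, (q i x - p i x) * margU u p i x + τ * (entropy (q i) - entropy (p i)))
        + ∑ i, ∑ x, (q i x - p i x) * (margU u (hybrid p q i) i x - margU u p i x) := by
    rw [regPot, regPot, add_sub_add_comm, expVal_sub_expVal_eq_sum_hybrid hpot hp1 hq1,
      ← mul_sub, ← sum_sub_distrib, mul_sum]
    simp only [mul_sub, sum_sub_distrib, sum_add_distrib]
    ring
  rw [hsplit]
  linarith [neg_abs_le
    (∑ i, ∑ x, (q i x - p i x) * (margU u (hybrid p q i) i x - margU u p i x)),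
    abs_sum_sum_mul_margU_hybrid_sub_le hu hp hq hp1 hq1]

end PotentialGame

theorem rpow_mul_exp_pos {x : ℝ} (hx : 0 < x) (s y : ℝ) : 0 < x ^ s * Real.exp y :=
  mul_pos (Real.rpow_pos_of_pos hx s) (Real.exp_pos y)

section NPG

variable {A : Type*} [Fintype A]

def npgUpdate (η τ : ℝ) (p r : A → ℝ) : A → ℝ :=
  fun a => p a ^ (1 - η * τ) * Real.exp (η * r a) /
    ∑ a', p a' ^ (1 - η * τ) * Real.exp (η * r a')

variable {η τ : ℝ} {p r : A → ℝ}

theorem npgUpdate_normalizer_pos (hp : ∀ a, 0 < p a) (a : A) :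
    0 < ∑ a', p a' ^ (1 - η * τ) * Real.exp (η * r a') :=
  sum_pos (fun a' _ => rpow_mul_exp_pos (hp a') _ _) ⟨a, mem_univ a⟩

theorem npgUpdate_pos (hp : ∀ a, 0 < p a) (a : A) : 0 < npgUpdate η τ p r a :=
  div_pos (rpow_mul_exp_pos (hp a) _ _) (npgUpdate_normalizer_pos hp a)

theorem sum_npgUpdate [Nonempty A] (hp : ∀ a, 0 < p a) : ∑ a, npgUpdate η τ p r a = 1 := by
  obtain ⟨a⟩ := ‹Nonempty A›
  simp only [npgUpdate]
  rw [← sum_div, div_self (npgUpdate_normalizer_pos hp a).ne']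

theorem log_npgUpdate (hp : ∀ a, 0 < p a) (a : A) :
    Real.log (npgUpdate η τ p r a) = (1 - η * τ) * Real.log (p a) + η * r a
      - Real.log (∑ a', p a' ^ (1 - η * τ) * Real.exp (η * r a')) := by
  rw [npgUpdate, Real.log_div (rpow_mul_exp_pos (hp a) _ _).ne'
    (npgUpdate_normalizer_pos hp a).ne', Real.log_mul (Real.rpow_pos_of_pos (hp a) _).ne'
    (Real.exp_pos _).ne', Real.log_rpow (hp a), Real.log_exp]

theorem mul_sum_sub_mul_add_entropy_sub {q : A → ℝ} {c : ℝ} (hqp : ∑ a, q a = ∑ a, p a)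
    (hlog : ∀ a, Real.log (q a) = (1 - η * τ) * Real.log (p a) + η * r a - c) :
    η * (∑ a, (q a - p a) * r a + τ * (entropy q - entropy p))
      = Jdiv q p - η * τ * KLdiv q p := by
  have hpoint : ∀ a, η * ((q a - p a) * r a)
      + η * τ * (p a * Real.log (p a) - q a * Real.log (q a))
      = (q a - p a) * (Real.log (q a) - Real.log (p a))
        - η * τ * (q a * (Real.log (q a) - Real.log (p a))) + c * (q a - p a) := fun a => by
    rw [show η * ((q a - p a) * r a) = (q a - p a) * (η * r a) by ring,
      show η * r a = Real.log (q a) - (1 - η * τ) * Real.log (p a) + c by linarith [hlog a]]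
    ring
  calc η * (∑ a, (q a - p a) * r a + τ * (entropy q - entropy p))
      = ∑ a, (η * ((q a - p a) * r a)
          + η * τ * (p a * Real.log (p a) - q a * Real.log (q a))) := by
        rw [sum_add_distrib, ← mul_sum, ← mul_sum, sum_sub_distrib, entropy, entropy]
        ring
    _ = Jdiv q p - η * τ * KLdiv q p := by
        rw [sum_congr rfl fun a _ => hpoint a, sum_add_distrib, sum_sub_distrib, ← mul_sum,
          ← mul_sum, sum_sub_distrib, hqp, sub_self, mul_zero, add_zero, Jdiv_eq_sum, KLdiv]

theorem le_sum_sub_mul_add_entropy_sub_npgUpdate [Nonempty A] (hp : ∀ a, 0 < p a)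
    (hp1 : ∑ a, p a = 1) (hη : 0 < η) (hτ : 0 ≤ τ) :
    (1 / η - τ) * Jdiv (npgUpdate η τ p r) p
      ≤ ∑ a, (npgUpdate η τ p r a - p a) * r a
        + τ * (entropy (npgUpdate η τ p r) - entropy p) := by
  set q := npgUpdate η τ p r
  have hq1 : ∑ a, q a = 1 := sum_npgUpdate hp
  have hid := mul_sum_sub_mul_add_entropy_sub (r := r) (hq1.trans hp1.symm)
    (log_npgUpdate (η := η) (τ := τ) hp)
  have hKL : 0 ≤ KLdiv p q := KLdiv_nonneg hp (npgUpdate_pos hp) (hp1.trans hq1.symm)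
  rw [← mul_le_mul_iff_of_pos_left hη, hid, ← mul_assoc, mul_sub, mul_one_div_cancel hη.ne',
    Jdiv]
  linarith [mul_nonneg (mul_nonneg hη.le hτ) hKL]

end NPG

theorem potential_improvement_sqrtN_general
    {N : ℕ} {A : Type*} [Fintype A] [DecidableEq A] [Nonempty A]
    (u : Fin N → (Fin N → A) → ℝ) (hu : ∀ i a, 0 ≤ u i a ∧ u i a ≤ 1)
    (Φ : (Fin N → A) → ℝ)
    (hpot : IsPotential u Φ)
    (τ η : ℝ) (hτ : 0 < τ) (hη : 0 < η)
    (π : ℕ → Fin N → A → ℝ)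
    (hdist : ∀ i, IsDist (π 0 i)) (hpos : ∀ i a, 0 < π 0 i a)
    (hstep : NPGstep u τ η π) :
    ∀ t : ℕ,
      regPot Φ τ (π (t + 1)) - regPot Φ τ (π t) ≥
        (1 / η - Real.sqrt N - τ) * Jdiv (jointPmf (π (t + 1))) (jointPmf (π t)) := by
  have hnext : ∀ t i, π (t + 1) i = npgUpdate η τ (π t i) (margU u (π t) i) :=
    fun t i => funext (hstep t i)
  have hvalid : ∀ t, (∀ i a, 0 < π t i a) ∧ ∀ i, ∑ a, π t i a = 1 := by
    intro t
    induction t with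
    | zero => exact ⟨hpos, fun i => (hdist i).2⟩
    | succ t ih =>
      simp only [hnext]
      exact ⟨fun i => npgUpdate_pos (ih.1 i), fun i => sum_npgUpdate (ih.1 i)⟩
  intro t
  obtain ⟨hp, hp1⟩ := hvalid t
  obtain ⟨hq, hq1⟩ := hvalid (t + 1)
  calc (1 / η - Real.sqrt N - τ) * Jdiv (jointPmf (π (t + 1))) (jointPmf (π t))
      = ∑ i, (1 / η - τ) * Jdiv (π (t + 1) i) (π t i)
          - Real.sqrt N * Jdiv (jointPmf (π (t + 1))) (jointPmf (π t)) := by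
        rw [← mul_sum, ← Jdiv_jointPmf hq hp hq1 hp1]
        ring
    _ ≤ ∑ i, (∑ a, (π (t + 1) i a - π t i a) * margU u (π t) i a
          + τ * (entropy (π (t + 1) i) - entropy (π t i)))
          - Real.sqrt N * Jdiv (jointPmf (π (t + 1))) (jointPmf (π t)) := by
        gcongr with i
        rw [hnext]
        exact le_sum_sub_mul_add_entropy_sub_npgUpdate (hp i) (hp1 i) hη hτ.le
    _ ≤ regPot Φ τ (π (t + 1)) - regPot Φ τ (π t) :=
        le_regPot_sub_regPot hu hpot τ hp hq hp1 hq1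

/-- Performance improvement of the regularized potential under independent NPG. -/
theorem potential_improvement_sqrtN
    {N : ℕ} (hN : 0 < N) {A : Type*} [Fintype A] [DecidableEq A] [Nonempty A]
    (u : Fin N → (Fin N → A) → ℝ) (hu : ∀ i a, 0 ≤ u i a ∧ u i a ≤ 1)
    (Φ : (Fin N → A) → ℝ) (Φmax : ℝ) (hΦ : ∀ a, 0 ≤ Φ a ∧ Φ a ≤ Φmax)
    (hpot : IsPotential u Φ)
    (τ η : ℝ) (hτ : 0 < τ) (hη : 0 < η)
    (π : ℕ → Fin N → A → ℝ)
    (hdist : ∀ i, IsDist (π 0 i)) (hpos : ∀ i a, 0 < π 0 i a)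
    (hstep : NPGstep u τ η π) :
    ∀ t : ℕ,
      regPot Φ τ (π (t + 1)) - regPot Φ τ (π t) ≥
        (1 / η - Real.sqrt N - τ) * Jdiv (jointPmf (π (t + 1))) (jointPmf (π t)) :=
  potential_improvement_sqrtN_general u hu Φ hpot τ η hτ hη π hdist hpos hstep
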